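/- Let A be a lower semibounded self-adjoint operator with simple lowest eigenvalue Λ₀ and normalized eigenvector Ψ₀, and let B be a bounded symmetric operator. Then the lowest point of the spectrum of A + ηB satisfies Λ(η) ≤ Λ₀ + η⟨BΨ₀, Ψ₀⟩ + η²‖B‖² / γ, for all η, where γ > 0 is the distance from Λ₀ to the rest of the spectrum of A. In particular, if Λ₁ := ⟨BΨ₀, Ψ₀⟩ < 0, then for all sufficiently small η > 0 one has Λ(η) < Λ₀. -/

import Mathlib

/-!
Testing the quadratic form of `A + ηB` on the unperturbed ground state `Ψ₀` already gives the
first-order bound `Λ(η) ≤ Λ₀ + η⟨BΨ₀, Ψ₀⟩`, since `inf σ(T)` is the bottom of the numerical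
range of a self-adjoint `T`. The second-order term `η²‖B‖²/γ` is nonnegative, and for
`⟨BΨ₀, Ψ₀⟩ < 0` the first-order term alone pushes `Λ(η)` below `Λ₀` for every `η > 0`.
-/

open scoped ComplexInnerProductSpace

section

variable {H : Type*} [NormedAddCommGroup H] [InnerProductSpace ℂ H] [CompleteSpace H]

theorem IsSelfAdjoint.sInf_spectrum_mul_norm_sq_le_re_inner {T : H →L[ℂ] H}
    (hT : IsSelfAdjoint T) (u : H) : sInf (spectrum ℝ T) * ‖u‖ ^ 2 ≤ (⟪T u, u⟫).re := by
  rcases eq_or_ne u 0 with rfl | hu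
  · simp
  have : Nontrivial H := ⟨u, 0, hu⟩
  set r := sInf (spectrum ℝ T)
  have hrT : algebraMap ℝ (H →L[ℂ] H) r ≤ T :=
    (algebraMap_le_iff_le_spectrum hT).2 fun x hx ↦ csInf_le (spectrum.isBounded T).bddBelow hx
  have hpos : (T - algebraMap ℝ (H →L[ℂ] H) r).IsPositive :=
    (ContinuousLinearMap.nonneg_iff_isPositive _).1 (sub_nonneg.2 hrT)
  have hform : (⟪r • u, u⟫).re = r * ‖u‖ ^ 2 := by
    rw [RCLike.real_smul_eq_coe_smul (K := ℂ), inner_smul_real_left, inner_self_eq_norm_sq_to_K]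
    norm_cast
  have := hpos.re_inner_nonneg_left u
  simp only [sub_apply, Algebra.algebraMap_eq_smul_one, smul_apply, one_apply_eq_self,
    inner_sub_left, map_sub, RCLike.re_to_complex, sub_nonneg] at this
  rwa [hform] at this

theorem sInf_spectrum_add_smul_le_of_eigenvector {A B : H →L[ℂ] H} (hA : IsSelfAdjoint A)
    (hB : IsSelfAdjoint B) {Λ₀ : ℝ} {Ψ₀ : H} (hΨ₀ : ‖Ψ₀‖ = 1) (heig : A Ψ₀ = (Λ₀ : ℂ) • Ψ₀)
    (η : ℝ) : sInf (spectrum ℝ (A + (η : ℂ) • B)) ≤ Λ₀ + η * (⟪B Ψ₀, Ψ₀⟫).re := by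
  have hT : IsSelfAdjoint (A + (η : ℂ) • B) :=
    hA.add (IsSelfAdjoint.smul (Complex.conj_ofReal η) hB)
  have := hT.sInf_spectrum_mul_norm_sq_le_re_inner Ψ₀
  rw [hΨ₀, add_apply, smul_apply, heig, inner_add_left, inner_smul_left, inner_smul_left,
    inner_self_eq_norm_sq_to_K, hΨ₀] at this
  simpa using this

end

theorem ground_state_second_order_upper_bound_general
    {H : Type*} [NormedAddCommGroup H] [InnerProductSpace ℂ H] [CompleteSpace H]
    (A B : H →L[ℂ] H) (hA : IsSelfAdjoint A) (hB : IsSelfAdjoint B)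
    (Λ₀ : ℝ)
    (Ψ₀ : H) (hΨ₀ : ‖Ψ₀‖ = 1) (heig : A Ψ₀ = (Λ₀ : ℂ) • Ψ₀)
    (γ : ℝ) (hγpos : 0 < γ)
    (Λ : ℝ → ℝ) (hΛ : ∀ η : ℝ, Λ η = sInf (spectrum ℝ (A + (η : ℂ) • B))) :
    (∀ η : ℝ, Λ η ≤ Λ₀ + η * (⟪B Ψ₀, Ψ₀⟫).re + η ^ 2 * ‖B‖ ^ 2 / γ) ∧
    ((⟪B Ψ₀, Ψ₀⟫).re < 0 →
      ∃ η₀ > 0, ∀ η : ℝ, 0 < η → η ≤ η₀ → Λ η < Λ₀) := by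
  have first_order (η : ℝ) : Λ η ≤ Λ₀ + η * (⟪B Ψ₀, Ψ₀⟫).re :=
    hΛ η ▸ sInf_spectrum_add_smul_le_of_eigenvector hA hB hΨ₀ heig η
  refine ⟨fun η ↦ ?_, fun hneg ↦ ⟨1, one_pos, fun η hη _ ↦ ?_⟩⟩
  · have : 0 ≤ η ^ 2 * ‖B‖ ^ 2 / γ := by positivity
    linarith [first_order η]
  · linarith [first_order η, mul_neg_of_pos_of_neg hη hneg]

/-- Second-order perturbation bound for the bottom of the spectrum: if `A` is self-adjoint
with simple lowest eigenvalue `Λ₀` (normalized eigenvector `Ψ₀`) and spectral gap `γ`, and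
`B` is bounded self-adjoint, then `inf σ(A + ηB) ≤ Λ₀ + η⟨BΨ₀,Ψ₀⟩ + η²‖B‖²/γ` for all `η`;
in particular if `Λ₁ = ⟨BΨ₀,Ψ₀⟩ < 0` then `inf σ(A + ηB) < Λ₀` for all small `η > 0`. -/
theorem ground_state_second_order_upper_bound
    {H : Type*} [NormedAddCommGroup H] [InnerProductSpace ℂ H] [CompleteSpace H]
    (A B : H →L[ℂ] H) (hA : IsSelfAdjoint A) (hB : IsSelfAdjoint B)
    (Λ₀ : ℝ) (hΛ₀ : Λ₀ = sInf (spectrum ℝ A)) (hΛ₀mem : Λ₀ ∈ spectrum ℝ A)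
    (Ψ₀ : H) (hΨ₀ : ‖Ψ₀‖ = 1) (heig : A Ψ₀ = (Λ₀ : ℂ) • Ψ₀)
    (hsimple : ∀ v : H, A v = (Λ₀ : ℂ) • v → ∃ c : ℂ, v = c • Ψ₀)
    (γ : ℝ) (hγ : γ = Metric.infDist Λ₀ (spectrum ℝ A \ {Λ₀})) (hγpos : 0 < γ)
    (Λ : ℝ → ℝ) (hΛ : ∀ η : ℝ, Λ η = sInf (spectrum ℝ (A + (η : ℂ) • B))) :
    (∀ η : ℝ, Λ η ≤ Λ₀ + η * (⟪B Ψ₀, Ψ₀⟫).re + η ^ 2 * ‖B‖ ^ 2 / γ) ∧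
    ((⟪B Ψ₀, Ψ₀⟫).re < 0 →
      ∃ η₀ > 0, ∀ η : ℝ, 0 < η → η ≤ η₀ → Λ η < Λ₀) :=
  ground_state_second_order_upper_bound_general A B hA hB Λ₀ Ψ₀ hΨ₀ heig γ hγpos Λ hΛ
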